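/- arXiv:2309.12582 — 2 statements merged into one kernel-verified Lean document; each statement's English description precedes it below -/
import Mathlib

section
/- On the 2-torus ℝ²/(ℤ a⃗ + ℤ b⃗) with unit covolume, the 2-form Ω = ρ dx∧dy − (dA − β)∧(dB + α), defined on T² × ℝ² with coordinates (x, y, A, B), where ρ − 1 has zero mean over the torus and α, β are the constant-coefficient dual harmonic 1-forms, is an exact 2-form. -/
open intervalIntegral MeasureTheory Metric Set

namespace TorusExact

noncomputable def lin4 (c₁ c₂ c₃ c₄ : ℝ) : (ℝ × ℝ × ℝ × ℝ) →ₗ[ℝ] ℝ where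
  toFun u := c₁ * u.1 + c₂ * u.2.1 + c₃ * u.2.2.1 + c₄ * u.2.2.2
  map_add' u v := by simp [Prod.fst_add, Prod.snd_add]; ring
  map_smul' c u := by simp [Prod.smul_fst, Prod.smul_snd, smul_eq_mul]; ring

noncomputable def clin4 (c₁ c₂ c₃ c₄ : ℝ) : (ℝ × ℝ × ℝ × ℝ) →L[ℝ] ℝ :=
  LinearMap.toContinuousLinearMap (lin4 c₁ c₂ c₃ c₄)

@[simp] lemma lin4_apply (c₁ c₂ c₃ c₄ : ℝ) (u : ℝ × ℝ × ℝ × ℝ) :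
    lin4 c₁ c₂ c₃ c₄ u = c₁ * u.1 + c₂ * u.2.1 + c₃ * u.2.2.1 + c₄ * u.2.2.2 := rfl

@[simp] lemma clin4_apply (c₁ c₂ c₃ c₄ : ℝ) (u : ℝ × ℝ × ℝ × ℝ) :
    clin4 c₁ c₂ c₃ c₄ u = c₁ * u.1 + c₂ * u.2.1 + c₃ * u.2.2.1 + c₄ * u.2.2.2 := rfl

lemma clin4_hasFDerivAt (c₁ c₂ c₃ c₄ : ℝ) (p : ℝ × ℝ × ℝ × ℝ) :
    HasFDerivAt (fun u : ℝ × ℝ × ℝ × ℝ => c₁ * u.1 + c₂ * u.2.1 + c₃ * u.2.2.1 + c₄ * u.2.2.2)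
      (clin4 c₁ c₂ c₃ c₄) p :=
  (clin4 c₁ c₂ c₃ c₄).hasFDerivAt

lemma hasDerivAt_slice {h : ℝ × ℝ → ℝ} (hh : ContDiff ℝ (⊤ : ℕ∞) h) (x τ : ℝ) :
    HasDerivAt (fun s => h (s, τ)) (fderiv ℝ h (x, τ) (1, 0)) x :=
  ((hh.differentiable (by simp) (x, τ)).hasFDerivAt).comp_hasDerivAt x
    ((hasDerivAt_id x).prodMk (hasDerivAt_const x τ))

lemma keyF {h : ℝ × ℝ → ℝ} (hh : ContDiff ℝ (⊤ : ℕ∞) h) (q : ℝ × ℝ) :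
    HasFDerivAt (fun q : ℝ × ℝ => ∫ τ in (0:ℝ)..q.2, h (q.1, τ))
      ((∫ τ in (0:ℝ)..q.2, fderiv ℝ h (q.1, τ) (1, 0)) • ContinuousLinearMap.fst ℝ ℝ ℝ
        + h q • ContinuousLinearMap.snd ℝ ℝ ℝ) q := by
  obtain ⟨s₀, t₀⟩ := q
  have hc : Continuous h := hh.continuous
  have hdcont : Continuous (fun z : ℝ × ℝ => fderiv ℝ h z (1, 0)) :=
    (hh.continuous_fderiv (by simp)).clm_apply continuous_const
  obtain ⟨C, hC⟩ := ((isCompact_closedBall s₀ 1).prod isCompact_uIcc).exists_bound_of_continuousOn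
    (hdcont.continuousOn (s := closedBall s₀ 1 ×ˢ uIcc (0:ℝ) t₀))
  have partA : HasDerivAt (fun s => ∫ τ in (0:ℝ)..t₀, h (s, τ))
      (∫ τ in (0:ℝ)..t₀, fderiv ℝ h (s₀, τ) (1, 0)) s₀ := by
    have := intervalIntegral.hasDerivAt_integral_of_dominated_loc_of_deriv_le
      (F := fun x τ => h (x, τ)) (F' := fun x τ => fderiv ℝ h (x, τ) (1, 0)) (x₀ := s₀)
      (a := 0) (b := t₀) (bound := fun _ => C) (μ := volume) (Metric.ball_mem_nhds s₀ one_pos)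
      (Filter.Eventually.of_forall fun x =>
        (hc.comp (Continuous.prodMk_right x)).aestronglyMeasurable)
      ((hc.comp (Continuous.prodMk_right s₀)).intervalIntegrable 0 t₀)
      (hdcont.comp (Continuous.prodMk_right s₀)).aestronglyMeasurable
      (MeasureTheory.ae_of_all _ fun τ hτ x hx =>
        hC (x, τ) ⟨ball_subset_closedBall hx, Set.Ioc_subset_Icc_self hτ⟩)
      intervalIntegrable_const
      (MeasureTheory.ae_of_all _ fun τ _ x _ => hasDerivAt_slice hh x τ)
    exact this.2
  have partB : HasFDerivAt (fun q : ℝ × ℝ => ∫ τ in t₀..q.2, h (q.1, τ))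
      (h (s₀, t₀) • ContinuousLinearMap.snd ℝ ℝ ℝ) (s₀, t₀) := by
    rw [hasFDerivAt_iff_isLittleO_nhds_zero, Asymptotics.isLittleO_iff]
    intro ε hε
    obtain ⟨δ, hδ, hcont⟩ := Metric.continuousAt_iff.1 hc.continuousAt ε hε
    filter_upwards [Metric.ball_mem_nhds (0 : ℝ × ℝ) hδ] with w hw
    rw [mem_ball_zero_iff] at hw
    have hint : ∀ (x : ℝ) (a b : ℝ), IntervalIntegrable (fun τ => h (x, τ)) volume a b :=
      fun x a b => (hc.comp (Continuous.prodMk_right x)).intervalIntegrable a b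
    have e1 : ((s₀, t₀) + w).1 = s₀ + w.1 := rfl
    have e2 : ((s₀, t₀) + w).2 = t₀ + w.2 := rfl
    have key : (∫ τ in t₀..(t₀ + w.2), h (s₀ + w.1, τ)) - h (s₀, t₀) * w.2
        = ∫ τ in t₀..(t₀ + w.2), (h (s₀ + w.1, τ) - h (s₀, t₀)) := by
      rw [intervalIntegral.integral_sub (hint _ _ _) intervalIntegrable_const,
        intervalIntegral.integral_const]
      ring_nf
    have hbound : ∀ τ ∈ Set.uIoc t₀ (t₀ + w.2), ‖h (s₀ + w.1, τ) - h (s₀, t₀)‖ ≤ ε := by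
      intro τ hτ
      have hτ' : |τ - t₀| ≤ |w.2| := by
        rcases Set.mem_uIoc.mp hτ with ⟨h1, h2⟩ | ⟨h1, h2⟩ <;> rw [abs_le] <;>
          constructor <;> nlinarith [le_abs_self w.2, neg_abs_le w.2]
      have hd : dist (s₀ + w.1, τ) (s₀, t₀) < δ := by
        rw [Prod.dist_eq]
        have h1 : dist (s₀ + w.1) s₀ < δ := by
          rw [Real.dist_eq]
          calc |s₀ + w.1 - s₀| = |w.1| := by ring_nf
          _ ≤ ‖w‖ := by simpa using norm_fst_le w
          _ < δ := hw
        have h2 : dist τ t₀ < δ := by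
          rw [Real.dist_eq]
          calc |τ - t₀| ≤ |w.2| := hτ'
          _ ≤ ‖w‖ := by simpa using norm_snd_le w
          _ < δ := hw
        exact max_lt h1 h2
      exact le_of_lt (by simpa [Real.dist_eq] using hcont hd)
    calc ‖(∫ τ in t₀..((s₀, t₀) + w).2, h (((s₀, t₀) + w).1, τ))
            - (∫ τ in t₀..(s₀, t₀).2, h ((s₀, t₀).1, τ))
            - (h (s₀, t₀) • ContinuousLinearMap.snd ℝ ℝ ℝ) w‖
        = ‖∫ τ in t₀..(t₀ + w.2), (h (s₀ + w.1, τ) - h (s₀, t₀))‖ := by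
          rw [e1, e2]
          simp only [intervalIntegral.integral_same, sub_zero,
            ContinuousLinearMap.smul_apply, ContinuousLinearMap.coe_snd', smul_eq_mul]
          rw [← key]
      _ ≤ ε * |t₀ + w.2 - t₀| := intervalIntegral.norm_integral_le_of_norm_le_const hbound
      _ ≤ ε * ‖w‖ := by
          apply mul_le_mul_of_nonneg_left _ (le_of_lt hε)
          calc |t₀ + w.2 - t₀| = |w.2| := by ring_nf
          _ ≤ ‖w‖ := by simpa using norm_snd_le w
  have hsplit : (fun q : ℝ × ℝ => ∫ τ in (0:ℝ)..q.2, h (q.1, τ))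
      = fun q : ℝ × ℝ => (∫ τ in (0:ℝ)..t₀, h (q.1, τ)) + ∫ τ in t₀..q.2, h (q.1, τ) := by
    funext q
    exact (intervalIntegral.integral_add_adjacent_intervals
      ((hc.comp (Continuous.prodMk_right q.1)).intervalIntegrable 0 t₀)
      ((hc.comp (Continuous.prodMk_right q.1)).intervalIntegrable t₀ q.2)).symm
  rw [hsplit]
  exact (partA.comp_hasFDerivAt (f := Prod.fst) (s₀, t₀) hasFDerivAt_fst).add partB




section

variable (ax ay bx bY : ℝ) (ρ : ℝ × ℝ → ℝ)

noncomputable def hfun : ℝ × ℝ → ℝ :=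
  fun q => ρ (q.1 * ax + q.2 * bx, q.1 * ay + q.2 * bY) - 1

noncomputable def Ffun : ℝ × ℝ → ℝ :=
  fun q => ∫ τ in (0:ℝ)..q.2, hfun ax ay bx bY ρ (q.1, τ)

noncomputable def Fsfun : ℝ × ℝ → ℝ :=
  fun q => ∫ τ in (0:ℝ)..q.2, fderiv ℝ (hfun ax ay bx bY ρ) (q.1, τ) (1, 0)

noncomputable def Mfun : ℝ → ℝ := fun s => Ffun ax ay bx bY ρ (s, 1)

noncomputable def Qfun : ℝ → ℝ := fun s => ∫ σ in (0:ℝ)..s, Mfun ax ay bx bY ρ σ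

noncomputable def Pfun : ℝ × ℝ → ℝ :=
  fun q => q.2 * Mfun ax ay bx bY ρ q.1 - Ffun ax ay bx bY ρ q

def Sfun : ℝ × ℝ × ℝ × ℝ → ℝ × ℝ :=
  fun p => (bY * p.1 - bx * p.2.1, -ay * p.1 + ax * p.2.1)

variable {ax ay bx bY ρ}

lemma hfun_contDiff (hρ : ContDiff ℝ (⊤ : ℕ∞) ρ) : ContDiff ℝ (⊤ : ℕ∞) (hfun ax ay bx bY ρ) := by
  apply ContDiff.sub _ contDiff_const
  apply hρ.comp
  apply ContDiff.prodMk <;> fun_prop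

lemma hfun_cont (hρ : ContDiff ℝ (⊤ : ℕ∞) ρ) : Continuous (hfun ax ay bx bY ρ) :=
  (hfun_contDiff hρ).continuous

lemma hF (hρ : ContDiff ℝ (⊤ : ℕ∞) ρ) (q : ℝ × ℝ) :
    HasFDerivAt (Ffun ax ay bx bY ρ)
      ((Fsfun ax ay bx bY ρ q) • ContinuousLinearMap.fst ℝ ℝ ℝ
        + (hfun ax ay bx bY ρ q) • ContinuousLinearMap.snd ℝ ℝ ℝ) q :=
  keyF (hfun_contDiff hρ) q

lemma hM (hρ : ContDiff ℝ (⊤ : ℕ∞) ρ) (s : ℝ) :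
    HasDerivAt (Mfun ax ay bx bY ρ) (Fsfun ax ay bx bY ρ (s, 1)) s := by
  have := (hF (ax := ax) (ay := ay) (bx := bx) (bY := bY) hρ (s, 1)).comp_hasDerivAt s
    ((hasDerivAt_id s).prodMk (hasDerivAt_const s (1:ℝ)))
  simp at this
  exact this

lemma Mcont (hρ : ContDiff ℝ (⊤ : ℕ∞) ρ) : Continuous (Mfun ax ay bx bY ρ) := by
  have hd : Differentiable ℝ (Mfun ax ay bx bY ρ) := fun s => (hM hρ s).differentiableAt
  exact hd.continuous

lemma hQ (hρ : ContDiff ℝ (⊤ : ℕ∞) ρ) (s : ℝ) :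
    HasDerivAt (Qfun ax ay bx bY ρ) (Mfun ax ay bx bY ρ s) s :=
  ((Mcont hρ).integral_hasStrictDerivAt 0 s).hasDerivAt

-- periodicity
lemma hfun_per1 (hper_a : ∀ p : ℝ × ℝ, ρ (p.1 + ax, p.2 + ay) = ρ p) (s t : ℝ) :
    hfun ax ay bx bY ρ (s + 1, t) = hfun ax ay bx bY ρ (s, t) := by
  have := hper_a (s * ax + t * bx, s * ay + t * bY)
  simp only [hfun]
  rw [show (s+1) * ax + t * bx = s * ax + t * bx + ax by ring,
    show (s+1) * ay + t * bY = s * ay + t * bY + ay by ring]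
  exact congrArg (· - 1) this

lemma hfun_per2 (hper_b : ∀ p : ℝ × ℝ, ρ (p.1 + bx, p.2 + bY) = ρ p) (s t : ℝ) :
    hfun ax ay bx bY ρ (s, t + 1) = hfun ax ay bx bY ρ (s, t) := by
  have := hper_b (s * ax + t * bx, s * ay + t * bY)
  simp only [hfun]
  rw [show s * ax + (t+1) * bx = s * ax + t * bx + bx by ring,
    show s * ay + (t+1) * bY = s * ay + t * bY + bY by ring]
  exact congrArg (· - 1) this

lemma Ffun_per1 (hper_a : ∀ p : ℝ × ℝ, ρ (p.1 + ax, p.2 + ay) = ρ p) (s t : ℝ) :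
    Ffun ax ay bx bY ρ (s + 1, t) = Ffun ax ay bx bY ρ (s, t) := by
  simp only [Ffun]
  exact intervalIntegral.integral_congr fun τ _ => hfun_per1 hper_a s τ

lemma Mfun_per (hper_a : ∀ p : ℝ × ℝ, ρ (p.1 + ax, p.2 + ay) = ρ p) (s : ℝ) :
    Mfun ax ay bx bY ρ (s + 1) = Mfun ax ay bx bY ρ s :=
  Ffun_per1 hper_a s 1

lemma Ffun_per2 (hρ : ContDiff ℝ (⊤ : ℕ∞) ρ)
    (hper_b : ∀ p : ℝ × ℝ, ρ (p.1 + bx, p.2 + bY) = ρ p) (s t : ℝ) :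
    Ffun ax ay bx bY ρ (s, t + 1) = Ffun ax ay bx bY ρ (s, t) + Mfun ax ay bx bY ρ s := by
  have hint : ∀ a b : ℝ, IntervalIntegrable (fun τ => hfun ax ay bx bY ρ (s, τ)) volume a b :=
    fun a b => ((hfun_cont hρ).comp (Continuous.prodMk_right s)).intervalIntegrable a b
  have hsp : Function.Periodic (fun τ => hfun ax ay bx bY ρ (s, τ)) 1 :=
    fun τ => hfun_per2 hper_b s τ
  have h1 : Ffun ax ay bx bY ρ (s, t + 1)
      = Ffun ax ay bx bY ρ (s, t) + ∫ τ in t..(t+1), hfun ax ay bx bY ρ (s, τ) := by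
    simp only [Ffun]
    exact (intervalIntegral.integral_add_adjacent_intervals (hint 0 t) (hint t (t+1))).symm
  rw [h1]
  congr 1
  have := hsp.intervalIntegral_add_eq t 0
  rw [this]
  simp only [Mfun, Ffun, zero_add]

lemma Pfun_per1 (hper_a : ∀ p : ℝ × ℝ, ρ (p.1 + ax, p.2 + ay) = ρ p) (s t : ℝ) :
    Pfun ax ay bx bY ρ (s + 1, t) = Pfun ax ay bx bY ρ (s, t) := by
  simp only [Pfun]
  rw [Mfun_per hper_a, Ffun_per1 hper_a]

lemma Pfun_per2 (hρ : ContDiff ℝ (⊤ : ℕ∞) ρ)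
    (hper_b : ∀ p : ℝ × ℝ, ρ (p.1 + bx, p.2 + bY) = ρ p) (s t : ℝ) :
    Pfun ax ay bx bY ρ (s, t + 1) = Pfun ax ay bx bY ρ (s, t) := by
  simp only [Pfun]
  rw [Ffun_per2 hρ hper_b]
  ring

lemma Qfun_per (hρ : ContDiff ℝ (⊤ : ℕ∞) ρ)
    (hper_a : ∀ p : ℝ × ℝ, ρ (p.1 + ax, p.2 + ay) = ρ p)
    (hmean0 : (∫ σ in (0:ℝ)..1, Mfun ax ay bx bY ρ σ) = 0) (s : ℝ) :
    Qfun ax ay bx bY ρ (s + 1) = Qfun ax ay bx bY ρ s := by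
  have hint : ∀ a b : ℝ, IntervalIntegrable (Mfun ax ay bx bY ρ) volume a b :=
    fun a b => (Mcont hρ).intervalIntegrable a b
  have hMp : Function.Periodic (Mfun ax ay bx bY ρ) 1 := fun σ => Mfun_per hper_a σ
  have h1 : Qfun ax ay bx bY ρ (s + 1)
      = Qfun ax ay bx bY ρ s + ∫ σ in s..(s+1), Mfun ax ay bx bY ρ σ := by
    simp only [Qfun]
    exact (intervalIntegral.integral_add_adjacent_intervals (hint 0 s) (hint s (s+1))).symm
  rw [h1, hMp.intervalIntegral_add_eq s 0]
  simpa using hmean0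

end



section

variable (ax ay bx bY : ℝ) (ρ : ℝ × ℝ → ℝ)

noncomputable def ωfun : (ℝ × ℝ × ℝ × ℝ) → (ℝ × ℝ × ℝ × ℝ) →ₗ[ℝ] ℝ := fun p =>
  lin4
    ((Pfun ax ay bx bY ρ (Sfun ax ay bx bY p) - p.2.2.1) * bY
      + (Qfun ax ay bx bY ρ (Sfun ax ay bx bY p).1 - p.2.2.2) * (-ay))
    ((Pfun ax ay bx bY ρ (Sfun ax ay bx bY p) - p.2.2.1) * (-bx)
      + (Qfun ax ay bx bY ρ (Sfun ax ay bx bY p).1 - p.2.2.2) * ax)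
    0
    (-p.2.2.1)

noncomputable def Dcoef (p v : ℝ × ℝ × ℝ × ℝ) : (ℝ × ℝ × ℝ × ℝ) →L[ℝ] ℝ :=
  clin4
    ((((Sfun ax ay bx bY p).2 * Fsfun ax ay bx bY ρ ((Sfun ax ay bx bY p).1, 1)
        - Fsfun ax ay bx bY ρ (Sfun ax ay bx bY p)) * bY
      + (Mfun ax ay bx bY ρ (Sfun ax ay bx bY p).1
          - hfun ax ay bx bY ρ (Sfun ax ay bx bY p)) * (-ay)) * (bY * v.1 - bx * v.2.1)
      + (Mfun ax ay bx bY ρ (Sfun ax ay bx bY p).1 * bY) * (-ay * v.1 + ax * v.2.1))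
    ((((Sfun ax ay bx bY p).2 * Fsfun ax ay bx bY ρ ((Sfun ax ay bx bY p).1, 1)
        - Fsfun ax ay bx bY ρ (Sfun ax ay bx bY p)) * (-bx)
      + (Mfun ax ay bx bY ρ (Sfun ax ay bx bY p).1
          - hfun ax ay bx bY ρ (Sfun ax ay bx bY p)) * ax) * (bY * v.1 - bx * v.2.1)
      + (Mfun ax ay bx bY ρ (Sfun ax ay bx bY p).1 * (-bx)) * (-ay * v.1 + ax * v.2.1))
    (-(bY * v.1 - bx * v.2.1) - v.2.2.2)
    (-(-ay * v.1 + ax * v.2.1))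

variable {ax ay bx bY ρ}

lemma omega_hasFDerivAt (hρ : ContDiff ℝ (⊤ : ℕ∞) ρ) (p v : ℝ × ℝ × ℝ × ℝ) :
    HasFDerivAt (fun q => ωfun ax ay bx bY ρ q v) (Dcoef ax ay bx bY ρ p v) p := by
  have hA3 : HasFDerivAt (fun q : ℝ × ℝ × ℝ × ℝ => q.2.2.1) (clin4 0 0 1 0) p := by
    have h : (fun u : ℝ × ℝ × ℝ × ℝ => 0*u.1 + 0*u.2.1 + 1*u.2.2.1 + 0*u.2.2.2)
        = fun q : ℝ × ℝ × ℝ × ℝ => q.2.2.1 := by funext u; ring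
    exact h ▸ clin4_hasFDerivAt 0 0 1 0 p
  have hA4 : HasFDerivAt (fun q : ℝ × ℝ × ℝ × ℝ => q.2.2.2) (clin4 0 0 0 1) p := by
    have h : (fun u : ℝ × ℝ × ℝ × ℝ => 0*u.1 + 0*u.2.1 + 0*u.2.2.1 + 1*u.2.2.2)
        = fun q : ℝ × ℝ × ℝ × ℝ => q.2.2.2 := by funext u; ring
    exact h ▸ clin4_hasFDerivAt 0 0 0 1 p
  have hCS : HasFDerivAt (fun q : ℝ × ℝ × ℝ × ℝ => bY * q.1 - bx * q.2.1)
      (clin4 bY (-bx) 0 0) p := by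
    have h : (fun u : ℝ × ℝ × ℝ × ℝ => bY*u.1 + (-bx)*u.2.1 + 0*u.2.2.1 + 0*u.2.2.2)
        = fun q : ℝ × ℝ × ℝ × ℝ => bY * q.1 - bx * q.2.1 := by funext u; ring
    exact h ▸ clin4_hasFDerivAt bY (-bx) 0 0 p
  have hCT : HasFDerivAt (fun q : ℝ × ℝ × ℝ × ℝ => -ay * q.1 + ax * q.2.1)
      (clin4 (-ay) ax 0 0) p := by
    have h : (fun u : ℝ × ℝ × ℝ × ℝ => (-ay)*u.1 + ax*u.2.1 + 0*u.2.2.1 + 0*u.2.2.2)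
        = fun q : ℝ × ℝ × ℝ × ℝ => -ay * q.1 + ax * q.2.1 := by funext u; ring
    exact h ▸ clin4_hasFDerivAt (-ay) ax 0 0 p
  have hSp : HasFDerivAt (Sfun ax ay bx bY)
      ((clin4 bY (-bx) 0 0).prod (clin4 (-ay) ax 0 0)) p := hCS.prodMk hCT
  have hMd := hM (ax := ax) (ay := ay) (bx := bx) (bY := bY) hρ (Sfun ax ay bx bY p).1
  have hPq : HasFDerivAt (Pfun ax ay bx bY ρ)
      (((Sfun ax ay bx bY p).2 • ((Fsfun ax ay bx bY ρ ((Sfun ax ay bx bY p).1, 1)) •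
          ContinuousLinearMap.fst ℝ ℝ ℝ)
        + (Mfun ax ay bx bY ρ (Sfun ax ay bx bY p).1) • ContinuousLinearMap.snd ℝ ℝ ℝ)
        - ((Fsfun ax ay bx bY ρ (Sfun ax ay bx bY p)) • ContinuousLinearMap.fst ℝ ℝ ℝ
          + (hfun ax ay bx bY ρ (Sfun ax ay bx bY p)) • ContinuousLinearMap.snd ℝ ℝ ℝ))
      (Sfun ax ay bx bY p) :=
    (hasFDerivAt_snd.mul (hMd.comp_hasFDerivAt _ hasFDerivAt_fst)).sub (hF hρ _)
  have hPS := hPq.comp p hSp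
  have hQS := (hQ (ax := ax) (ay := ay) (bx := bx) (bY := bY) hρ
    (Sfun ax ay bx bY p).1).comp_hasFDerivAt p hCS
  have hc1 := ((hPS.sub hA3).mul_const bY).add ((hQS.sub hA4).mul_const (-ay))
  have hc2 := ((hPS.sub hA3).mul_const (-bx)).add ((hQS.sub hA4).mul_const ax)
  have hω := (((hc1.mul_const v.1).add (hc2.mul_const v.2.1)).add
      (hasFDerivAt_const (0 * v.2.2.1) p)).add ((hA3.neg).mul_const v.2.2.2)
  have hDeq : (Dcoef ax ay bx bY ρ p v : (ℝ × ℝ × ℝ × ℝ) →L[ℝ] ℝ)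
      = (v.1 • (bY • ((((Sfun ax ay bx bY p).2 • ((Fsfun ax ay bx bY ρ ((Sfun ax ay bx bY p).1, 1)) •
            ContinuousLinearMap.fst ℝ ℝ ℝ)
          + (Mfun ax ay bx bY ρ (Sfun ax ay bx bY p).1) • ContinuousLinearMap.snd ℝ ℝ ℝ)
          - ((Fsfun ax ay bx bY ρ (Sfun ax ay bx bY p)) • ContinuousLinearMap.fst ℝ ℝ ℝ
            + (hfun ax ay bx bY ρ (Sfun ax ay bx bY p)) • ContinuousLinearMap.snd ℝ ℝ ℝ)).comp
            ((clin4 bY (-bx) 0 0).prod (clin4 (-ay) ax 0 0)) - clin4 0 0 1 0)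
          + (-ay) • ((Mfun ax ay bx bY ρ (Sfun ax ay bx bY p).1) • clin4 bY (-bx) 0 0
              - clin4 0 0 0 1))
        + v.2.1 • ((-bx) • ((((Sfun ax ay bx bY p).2 • ((Fsfun ax ay bx bY ρ ((Sfun ax ay bx bY p).1, 1)) •
            ContinuousLinearMap.fst ℝ ℝ ℝ)
          + (Mfun ax ay bx bY ρ (Sfun ax ay bx bY p).1) • ContinuousLinearMap.snd ℝ ℝ ℝ)
          - ((Fsfun ax ay bx bY ρ (Sfun ax ay bx bY p)) • ContinuousLinearMap.fst ℝ ℝ ℝ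
            + (hfun ax ay bx bY ρ (Sfun ax ay bx bY p)) • ContinuousLinearMap.snd ℝ ℝ ℝ)).comp
            ((clin4 bY (-bx) 0 0).prod (clin4 (-ay) ax 0 0)) - clin4 0 0 1 0)
          + ax • ((Mfun ax ay bx bY ρ (Sfun ax ay bx bY p).1) • clin4 bY (-bx) 0 0
              - clin4 0 0 0 1))
        + 0 + v.2.2.2 • (-(clin4 0 0 1 0))) := by
    apply ContinuousLinearMap.ext
    intro u
    simp only [Dcoef, clin4_apply, ContinuousLinearMap.add_apply, ContinuousLinearMap.smul_apply,
      ContinuousLinearMap.sub_apply, ContinuousLinearMap.coe_comp', Function.comp_apply,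
      ContinuousLinearMap.prod_apply, ContinuousLinearMap.coe_fst', ContinuousLinearMap.coe_snd',
      ContinuousLinearMap.neg_apply, ContinuousLinearMap.zero_apply, smul_eq_mul]
    ring
  rw [hDeq]
  exact hω

end

section

variable {ax ay bx bY : ℝ} {ρ : ℝ × ℝ → ℝ}

lemma hfun_Sfun (hdet : ax * bY - ay * bx = 1) (p : ℝ × ℝ × ℝ × ℝ) :
    hfun ax ay bx bY ρ (Sfun ax ay bx bY p) = ρ (p.1, p.2.1) - 1 := by
  have e1 : (bY * p.1 - bx * p.2.1) * ax + (-ay * p.1 + ax * p.2.1) * bx = p.1 := by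
    linear_combination p.1 * hdet
  have e2 : (bY * p.1 - bx * p.2.1) * ay + (-ay * p.1 + ax * p.2.1) * bY = p.2.1 := by
    linear_combination p.2.1 * hdet
  simp only [hfun, Sfun]
  rw [e1, e2]

lemma Sfun_shift_a (hdet : ax * bY - ay * bx = 1) (p : ℝ × ℝ × ℝ × ℝ) :
    Sfun ax ay bx bY (p.1 + ax, p.2.1 + ay, p.2.2)
      = ((Sfun ax ay bx bY p).1 + 1, (Sfun ax ay bx bY p).2) := by
  simp only [Sfun]
  exact Prod.ext (by linear_combination hdet) (by ring)

lemma Sfun_shift_b (hdet : ax * bY - ay * bx = 1) (p : ℝ × ℝ × ℝ × ℝ) :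
    Sfun ax ay bx bY (p.1 + bx, p.2.1 + bY, p.2.2)
      = ((Sfun ax ay bx bY p).1, (Sfun ax ay bx bY p).2 + 1) := by
  simp only [Sfun]
  exact Prod.ext (by ring) (by linear_combination hdet)

lemma omega_per_a (hρ : ContDiff ℝ (⊤ : ℕ∞) ρ) (hdet : ax * bY - ay * bx = 1)
    (hper_a : ∀ p : ℝ × ℝ, ρ (p.1 + ax, p.2 + ay) = ρ p)
    (hmean0 : (∫ σ in (0:ℝ)..1, Mfun ax ay bx bY ρ σ) = 0) (p : ℝ × ℝ × ℝ × ℝ) :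
    ωfun ax ay bx bY ρ (p.1 + ax, p.2.1 + ay, p.2.2) = ωfun ax ay bx bY ρ p := by
  simp only [ωfun, Sfun_shift_a hdet]
  rw [Qfun_per hρ hper_a hmean0, Pfun_per1 hper_a, Prod.mk.eta]

lemma omega_per_b (hρ : ContDiff ℝ (⊤ : ℕ∞) ρ) (hdet : ax * bY - ay * bx = 1)
    (hper_b : ∀ p : ℝ × ℝ, ρ (p.1 + bx, p.2 + bY) = ρ p) (p : ℝ × ℝ × ℝ × ℝ) :
    ωfun ax ay bx bY ρ (p.1 + bx, p.2.1 + bY, p.2.2) = ωfun ax ay bx bY ρ p := by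
  simp only [ωfun, Sfun_shift_b hdet]
  rw [Pfun_per2 hρ hper_b, Prod.mk.eta]

end

end TorusExact

open intervalIntegral

open TorusExact in
/-- On the phase space `T² × ℝ²` (coordinates `(x,y,A,B)`, torus `ℝ²/(ℤa⃗+ℤb⃗)` of
unit covolume), the 2-form `Ω = ρ dx∧dy − (dA − β)∧(dB + α)` — with
`α = b_y dx − bₓ dy`, `β = −a_y dx + aₓ dy` the constant dual harmonic 1-forms
and `ρ − 1` of zero mean over the torus — is exact: there exists a (lattice-periodic
in `(x,y)`, differentiable) 1-form `ω` with `dω = Ω`. -/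
theorem torus_symplectic_form_exact (ax ay bx bY : ℝ) (hdet : ax * bY - ay * bx = 1)
    (ρ : ℝ × ℝ → ℝ) (hρ : ContDiff ℝ (⊤ : ℕ∞) ρ)
    (hper_a : ∀ p : ℝ × ℝ, ρ (p.1 + ax, p.2 + ay) = ρ p)
    (hper_b : ∀ p : ℝ × ℝ, ρ (p.1 + bx, p.2 + bY) = ρ p)
    (hmean : (∫ s in (0:ℝ)..1, ∫ t in (0:ℝ)..1,
        (ρ (s * ax + t * bx, s * ay + t * bY) - 1)) = 0) :
    let α : ℝ × ℝ × ℝ × ℝ → ℝ := fun u => bY * u.1 - bx * u.2.1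
    let β : ℝ × ℝ × ℝ × ℝ → ℝ := fun u => -ay * u.1 + ax * u.2.1
    let Ω : (ℝ × ℝ × ℝ × ℝ) → (ℝ × ℝ × ℝ × ℝ) → (ℝ × ℝ × ℝ × ℝ) → ℝ := fun p u v =>
      ρ (p.1, p.2.1) * (u.1 * v.2.1 - u.2.1 * v.1)
        - ((u.2.2.1 - β u) * (v.2.2.2 + α v) - (v.2.2.1 - β v) * (u.2.2.2 + α u))
    ∃ ω : (ℝ × ℝ × ℝ × ℝ) → (ℝ × ℝ × ℝ × ℝ) →ₗ[ℝ] ℝ,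
      (∀ v, Differentiable ℝ (fun p => ω p v)) ∧
      (∀ p : ℝ × ℝ × ℝ × ℝ, ω (p.1 + ax, p.2.1 + ay, p.2.2) = ω p) ∧
      (∀ p : ℝ × ℝ × ℝ × ℝ, ω (p.1 + bx, p.2.1 + bY, p.2.2) = ω p) ∧
      (∀ p u v : ℝ × ℝ × ℝ × ℝ,
        fderiv ℝ (fun q => ω q v) p u - fderiv ℝ (fun q => ω q u) p v = Ω p u v) := by
  intro α β Ω
  have hmean0 : (∫ σ in (0:ℝ)..1, Mfun ax ay bx bY ρ σ) = 0 := hmean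
  refine ⟨ωfun ax ay bx bY ρ,
    fun v p => (omega_hasFDerivAt hρ p v).differentiableAt,
    fun p => omega_per_a hρ hdet hper_a hmean0 p,
    fun p => omega_per_b hρ hdet hper_b p,
    fun p u v => ?_⟩
  rw [(omega_hasFDerivAt hρ p v).fderiv, (omega_hasFDerivAt hρ p u).fderiv]
  show Dcoef ax ay bx bY ρ p v u - Dcoef ax ay bx bY ρ p u v =
    ρ (p.1, p.2.1) * (u.1 * v.2.1 - u.2.1 * v.1)
      - ((u.2.2.1 - (-ay * u.1 + ax * u.2.1)) * (v.2.2.2 + (bY * v.1 - bx * v.2.1))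
        - (v.2.2.1 - (-ay * v.1 + ax * v.2.1)) * (u.2.2.2 + (bY * u.1 - bx * u.2.1)))
  simp only [Dcoef, clin4_apply]
  rw [hfun_Sfun hdet]
  linear_combination (ρ (p.1, p.2.1) * (u.1 * v.2.1 - u.2.1 * v.1)) * hdet
end

section
/- The function G(z,w) on the unit disk defined piecewise on the Schottky double by 8π G(z,w) = 4 log(1/|z−w|) + |z|² + |w|² + c for |z|<1, |w|<1, and 8π G(z,w) = 4 log(1/|z−w|) + |z|^{-2} + |w|² + 4 log|z| + c for |z|>1, |w|<1, satisfies: for fixed w with |w|<1 and z ≠ w, the Euclidean Laplacian (∂²_x + ∂²_y) of 8π G(·,w) equals 4 on |z|<1 and equals 4|z|^{-4} on |z|>1; moreover the two expressions and their first derivatives match continuously across |z|=1. -/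
set_option linter.all false

open Filter

/-- Euclidean Laplacian `∂²_x + ∂²_y` of a function `f : ℂ → ℝ` at `z = x + iy`. -/
noncomputable def euclLap (f : ℂ → ℝ) (z : ℂ) : ℝ :=
  iteratedDeriv 2 (fun x : ℝ => f ((x : ℂ) + (z.im : ℂ) * Complex.I)) z.re +
  iteratedDeriv 2 (fun y : ℝ => f ((z.re : ℂ) + (y : ℂ) * Complex.I)) z.im

private lemma iterDeriv_two (f : ℝ → ℝ) (x : ℝ) :
    iteratedDeriv 2 f x = deriv (deriv f) x := by
  rw [iteratedDeriv_succ, iteratedDeriv_one]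

private lemma deriv2_of (f f' : ℝ → ℝ) {f'' : ℝ} {x : ℝ}
    (h1 : ∀ᶠ y in nhds x, HasDerivAt f (f' y) y)
    (h2 : HasDerivAt f' f'' x) :
    iteratedDeriv 2 f x = f'' := by
  rw [iterDeriv_two]
  have h3 : deriv f =ᶠ[nhds x] f' := h1.mono fun y hy => hy.deriv
  rw [h3.deriv_eq]
  exact h2.deriv

private lemma comb1 (P Q : ℝ) (hu : P + Q ≠ 0) :
    -2 * ((2 * Q - 2 * P) / (P + Q) ^ 2) + 2 + (-2 * ((2 * P - 2 * Q) / (Q + P) ^ 2) + 2)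
      = 4 := by
  rw [add_comm Q P]; field_simp; ring

private lemma comb2 (P Q X Y : ℝ) (hu : P + Q ≠ 0) (hv : X + Y ≠ 0) :
    -2 * ((2 * Q - 2 * P) / (P + Q) ^ 2) + (6 * X - 2 * Y) / (X + Y) ^ 3
        + (4 * Y - 4 * X) / (X + Y) ^ 2
      + (-2 * ((2 * P - 2 * Q) / (Q + P) ^ 2) + (6 * Y - 2 * X) / (Y + X) ^ 3
        + (4 * X - 4 * Y) / (Y + X) ^ 2)
      = 4 * ((X + Y) ^ 2)⁻¹ := by
  rw [add_comm Q P, add_comm Y X]; field_simp; ring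

private lemma hasDerivAt_u (a q x : ℝ) :
    HasDerivAt (fun t : ℝ => (t - a) ^ 2 + q) (2 * (x - a)) x := by
  have := (((hasDerivAt_id x).sub_const a).pow 2).add_const q
  simpa [mul_comm] using this

private lemma hasDerivAt_v (s x : ℝ) :
    HasDerivAt (fun t : ℝ => t ^ 2 + s) (2 * x) x := by
  have := (hasDerivAt_pow 2 x).add_const s
  simpa [mul_comm] using this

/-- Second derivative along a line of the inside Green formula. -/
private lemma sd1 (a q s k : ℝ) {x : ℝ} (h : (x - a) ^ 2 + q ≠ 0) :
    iteratedDeriv 2 (fun t : ℝ => -2 * Real.log ((t - a) ^ 2 + q) + (t ^ 2 + s) + k) x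
      = -2 * ((2 * q - 2 * (x - a) ^ 2) / ((x - a) ^ 2 + q) ^ 2) + 2 := by
  have hc : ContinuousAt (fun t : ℝ => (t - a) ^ 2 + q) x := by fun_prop
  have hev : ∀ᶠ t in nhds x, (t - a) ^ 2 + q ≠ 0 := hc.eventually_ne h
  have h1 : ∀ᶠ t in nhds x, HasDerivAt
      (fun t : ℝ => -2 * Real.log ((t - a) ^ 2 + q) + (t ^ 2 + s) + k)
      (-2 * (2 * (t - a) / ((t - a) ^ 2 + q)) + 2 * t) t := by
    filter_upwards [hev] with t ht
    exact ((((hasDerivAt_u a q t).log ht).const_mul (-2)).add (hasDerivAt_v s t)).add_const k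
  have hnum : HasDerivAt (fun t : ℝ => 2 * (t - a)) 2 x := by
    simpa using ((hasDerivAt_id x).sub_const a).const_mul 2
  have h2 := ((hnum.div (hasDerivAt_u a q x) h).const_mul (-2)).add
    ((hasDerivAt_id x).const_mul 2)
  rw [deriv2_of _ _ h1 (by simpa [Pi.add_def] using h2)]
  field_simp
  ring

/-- Second derivative along a line of the outside Green formula. -/
private lemma sd2 (a q s k : ℝ) {x : ℝ} (h : (x - a) ^ 2 + q ≠ 0) (hv : x ^ 2 + s ≠ 0) :
    iteratedDeriv 2 (fun t : ℝ =>
        -2 * Real.log ((t - a) ^ 2 + q) + (t ^ 2 + s)⁻¹ + k + 2 * Real.log (t ^ 2 + s)) x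
      = -2 * ((2 * q - 2 * (x - a) ^ 2) / ((x - a) ^ 2 + q) ^ 2)
        + (6 * x ^ 2 - 2 * s) / (x ^ 2 + s) ^ 3
        + (4 * s - 4 * x ^ 2) / (x ^ 2 + s) ^ 2 := by
  have hc : ContinuousAt (fun t : ℝ => (t - a) ^ 2 + q) x := by fun_prop
  have hcv : ContinuousAt (fun t : ℝ => t ^ 2 + s) x := by fun_prop
  have hev : ∀ᶠ t in nhds x, (t - a) ^ 2 + q ≠ 0 ∧ t ^ 2 + s ≠ 0 :=
    (hc.eventually_ne h).and (hcv.eventually_ne hv)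
  have h1 : ∀ᶠ t in nhds x, HasDerivAt
      (fun t : ℝ =>
        -2 * Real.log ((t - a) ^ 2 + q) + (t ^ 2 + s)⁻¹ + k + 2 * Real.log (t ^ 2 + s))
      (-2 * (2 * (t - a) / ((t - a) ^ 2 + q)) + -(2 * t) / (t ^ 2 + s) ^ 2
        + 2 * (2 * t / (t ^ 2 + s))) t := by
    filter_upwards [hev] with t ht
    exact (((((hasDerivAt_u a q t).log ht.1).const_mul (-2)).add
      ((hasDerivAt_v s t).inv ht.2)).add_const k).add
      (((hasDerivAt_v s t).log ht.2).const_mul 2)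
  have hnum : HasDerivAt (fun t : ℝ => 2 * (t - a)) 2 x := by
    simpa using ((hasDerivAt_id x).sub_const a).const_mul 2
  have hnum2 : HasDerivAt (fun t : ℝ => -(2 * t)) (-2) x := by
    simpa [Pi.neg_def] using ((hasDerivAt_id x).const_mul 2).neg
  have hnum3 : HasDerivAt (fun t : ℝ => 2 * t) 2 x := by
    simpa using (hasDerivAt_id x).const_mul 2
  have hden2 : HasDerivAt (fun t : ℝ => (t ^ 2 + s) ^ 2)
      (↑2 * (x ^ 2 + s) ^ 1 * (2 * x)) x := (hasDerivAt_v s x).pow 2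
  have h2 := (((hnum.div (hasDerivAt_u a q x) h).const_mul (-2)).add
      (hnum2.div hden2 (pow_ne_zero 2 hv))).add
      ((hnum3.div (hasDerivAt_v s x) hv).const_mul 2)
  rw [deriv2_of _ _ h1 h2]
  field_simp
  ring

/-- The piecewise formula for `8π G(·,w)` on the Schottky double of the unit disk
(`w` fixed in the disk): inside the disk the Euclidean Laplacian equals `4`
away from the pole, outside it equals `4|z|⁻⁴`, and the two expressions match
to first order (values and derivatives) across `|z| = 1`. -/
theorem schottky_double_disk_green (w : ℂ) (hw : ‖w‖ < 1) (c : ℝ) :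
    let g₁ : ℂ → ℝ := fun z =>
      4 * Real.log (1 / ‖z - w‖) + (‖z‖)^2 + (‖w‖)^2 + c
    let g₂ : ℂ → ℝ := fun z =>
      4 * Real.log (1 / ‖z - w‖) + (‖z‖)^(-2 : ℤ)
        + (‖w‖)^2 + 4 * Real.log (‖z‖) + c
    (∀ z : ℂ, ‖z‖ < 1 → z ≠ w → euclLap g₁ z = 4) ∧
    (∀ z : ℂ, 1 < ‖z‖ → euclLap g₂ z = 4 * (‖z‖)^(-4 : ℤ)) ∧
    (∀ z : ℂ, ‖z‖ = 1 → g₁ z = g₂ z ∧ fderiv ℝ g₁ z = fderiv ℝ g₂ z) := by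
  intro g₁ g₂
  have habs : ∀ ζ : ℂ, 4 * Real.log (1 / ‖ζ‖) = -2 * Real.log (Complex.normSq ζ) := by
    intro ζ
    rw [one_div, Real.log_inv, Complex.norm_def, Real.log_sqrt (Complex.normSq_nonneg ζ)]
    ring
  have hlogabs : ∀ ζ : ℂ, 4 * Real.log (‖ζ‖) = 2 * Real.log (Complex.normSq ζ) := by
    intro ζ; rw [Complex.norm_def, Real.log_sqrt (Complex.normSq_nonneg ζ)]; ring
  have hzpow2 : ∀ ζ : ℂ, (‖ζ‖) ^ (-2 : ℤ) = (Complex.normSq ζ)⁻¹ := by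
    intro ζ
    rw [show (-2 : ℤ) = -((2 : ℕ) : ℤ) by norm_num, zpow_neg, zpow_natCast, Complex.sq_norm]
  -- slice value computations
  have keyx : ∀ z : ℂ, ∀ x : ℝ, Complex.normSq ((x : ℂ) + (z.im : ℂ) * Complex.I - w)
      = (x - w.re) ^ 2 + (z.im - w.im) ^ 2 := by
    intro z x
    simp only [Complex.normSq_apply, Complex.sub_re, Complex.add_re, Complex.ofReal_re,
      Complex.mul_re, Complex.ofReal_im, Complex.I_re, Complex.I_im, Complex.sub_im,
      Complex.add_im, Complex.mul_im]
    ring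
  have keyy : ∀ z : ℂ, ∀ y : ℝ, Complex.normSq ((z.re : ℂ) + (y : ℂ) * Complex.I - w)
      = (y - w.im) ^ 2 + (z.re - w.re) ^ 2 := by
    intro z y
    simp only [Complex.normSq_apply, Complex.sub_re, Complex.add_re, Complex.ofReal_re,
      Complex.mul_re, Complex.ofReal_im, Complex.I_re, Complex.I_im, Complex.sub_im,
      Complex.add_im, Complex.mul_im]
    ring
  have hnz : ∀ z : ℂ, z ≠ w → (z.re - w.re) ^ 2 + (z.im - w.im) ^ 2 ≠ 0 := by
    intro z hzw
    have h1 := keyx z z.re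
    rw [Complex.re_add_im] at h1
    rw [← h1]
    exact ne_of_gt (Complex.normSq_pos.mpr (sub_ne_zero.mpr hzw))
  refine ⟨?_, ?_, ?_⟩
  · -- inside
    intro z hz hzw
    have hx : (fun x : ℝ => g₁ ((x : ℂ) + (z.im : ℂ) * Complex.I))
        = fun x : ℝ => -2 * Real.log ((x - w.re) ^ 2 + (z.im - w.im) ^ 2)
            + (x ^ 2 + z.im ^ 2) + ((‖w‖) ^ 2 + c) := by
      funext x
      simp only [g₁]
      rw [habs, keyx z x, Complex.sq_norm, Complex.normSq_add_mul_I]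
      ring
    have hy : (fun y : ℝ => g₁ ((z.re : ℂ) + (y : ℂ) * Complex.I))
        = fun y : ℝ => -2 * Real.log ((y - w.im) ^ 2 + (z.re - w.re) ^ 2)
            + (y ^ 2 + z.re ^ 2) + ((‖w‖) ^ 2 + c) := by
      funext y
      simp only [g₁]
      rw [habs, keyy z y, Complex.sq_norm, Complex.normSq_add_mul_I]
      ring
    have hne := hnz z hzw
    have hne' : (z.im - w.im) ^ 2 + (z.re - w.re) ^ 2 ≠ 0 := by
      intro h0; exact hne (by linarith)
    rw [euclLap, hx, hy, sd1 _ _ _ _ hne, sd1 _ _ _ _ hne']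
    exact comb1 _ _ hne
  · -- outside
    intro z hz
    have hzw : z ≠ w := by
      intro h; rw [h] at hz; linarith
    have hz0 : z ≠ 0 := by
      intro h; rw [h] at hz; simp at hz; linarith
    have hvne : z.re ^ 2 + z.im ^ 2 ≠ 0 := by
      have := Complex.normSq_pos.mpr hz0
      rw [Complex.normSq_apply] at this
      intro h0; nlinarith
    have hvne' : z.im ^ 2 + z.re ^ 2 ≠ 0 := by intro h0; exact hvne (by linarith)
    have hx : (fun x : ℝ => g₂ ((x : ℂ) + (z.im : ℂ) * Complex.I))
        = fun x : ℝ => -2 * Real.log ((x - w.re) ^ 2 + (z.im - w.im) ^ 2)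
            + (x ^ 2 + z.im ^ 2)⁻¹ + ((‖w‖) ^ 2 + c)
            + 2 * Real.log (x ^ 2 + z.im ^ 2) := by
      funext x
      simp only [g₂]
      rw [habs, keyx z x, hzpow2, hlogabs, Complex.normSq_add_mul_I]
      ring
    have hy : (fun y : ℝ => g₂ ((z.re : ℂ) + (y : ℂ) * Complex.I))
        = fun y : ℝ => -2 * Real.log ((y - w.im) ^ 2 + (z.re - w.re) ^ 2)
            + (y ^ 2 + z.re ^ 2)⁻¹ + ((‖w‖) ^ 2 + c)
            + 2 * Real.log (y ^ 2 + z.re ^ 2) := by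
      funext y
      simp only [g₂]
      rw [habs, keyy z y, hzpow2, hlogabs, Complex.normSq_add_mul_I]
      ring_nf
    have hne := hnz z hzw
    have hne' : (z.im - w.im) ^ 2 + (z.re - w.re) ^ 2 ≠ 0 := by
      intro h0; exact hne (by linarith)
    have hpow4 : (‖z‖) ^ (-4 : ℤ) = ((z.re ^ 2 + z.im ^ 2) ^ 2)⁻¹ := by
      rw [show (-4 : ℤ) = -((4 : ℕ) : ℤ) by norm_num, zpow_neg, zpow_natCast,
        show (4 : ℕ) = 2 * 2 by norm_num, pow_mul, Complex.sq_norm, Complex.normSq_apply]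
      ring_nf
    rw [euclLap, hx, hy, sd2 _ _ _ _ hne hvne, sd2 _ _ _ _ hne' hvne', hpow4]
    exact comb2 _ _ _ _ hne hvne
  · -- matching
    intro z hz
    have hz0 : z ≠ 0 := by
      intro h; rw [h] at hz; simp at hz
    have hzw : z ≠ w := by
      intro h; rw [h] at hz; linarith
    have hN1 : Complex.normSq z = 1 := by rw [← Complex.sq_norm, hz]; norm_num
    have hN0 : Complex.normSq z ≠ 0 := by rw [hN1]; norm_num
    have hNw0 : Complex.normSq (z - w) ≠ 0 :=
      ne_of_gt (Complex.normSq_pos.mpr (sub_ne_zero.mpr hzw))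
    constructor
    · simp only [g₁, g₂, hz]
      norm_num
    · -- derivatives match
      have g1eq : g₁ = fun ζ => -2 * Real.log (Complex.normSq (ζ - w)) + Complex.normSq ζ
          + ((‖w‖) ^ 2 + c) := by
        funext ζ; simp only [g₁]; rw [habs, Complex.sq_norm]; ring
      have g2eq : g₂ = fun ζ => -2 * Real.log (Complex.normSq (ζ - w)) + (Complex.normSq ζ)⁻¹
          + ((‖w‖) ^ 2 + c) + 2 * Real.log (Complex.normSq ζ) := by
        funext ζ; simp only [g₂]; rw [habs, hzpow2, hlogabs]; ring
      have hNdiff : Differentiable ℝ Complex.normSq := by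
        have h : (Complex.normSq : ℂ → ℝ) = fun ζ => ζ.re * ζ.re + ζ.im * ζ.im :=
          funext fun ζ => Complex.normSq_apply ζ
        have hre : Differentiable ℝ (fun ζ : ℂ => ζ.re) := Complex.reCLM.differentiable
        have him : Differentiable ℝ (fun ζ : ℂ => ζ.im) := Complex.imCLM.differentiable
        rw [h]; exact (hre.mul hre).add (him.mul him)
      have hsubdiff : DifferentiableAt ℝ (fun ζ : ℂ => Complex.normSq (ζ - w)) z :=
        (hNdiff _).comp z ((differentiable_id.sub_const w) z)
      have hlog1 : DifferentiableAt ℝ (fun ζ : ℂ => Real.log (Complex.normSq (ζ - w))) z :=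
        hsubdiff.log hNw0
      have hlog2 : DifferentiableAt ℝ (fun ζ : ℂ => Real.log (Complex.normSq ζ)) z :=
        (Real.differentiableAt_log hN0).comp z (hNdiff z)
      have hdg2 : DifferentiableAt ℝ g₂ z := by
        rw [g2eq]
        exact (((hlog1.const_mul (-2)).add ((hNdiff z).inv hN0)).add_const _).add
          (hlog2.const_mul 2)
      -- the difference function has vanishing derivative at |z| = 1
      have hφ : HasDerivAt (fun t : ℝ => t - t⁻¹ - 2 * Real.log t) 0 (Complex.normSq z) := by
        rw [hN1]
        have h1 := ((hasDerivAt_id (1 : ℝ)).sub ((hasDerivAt_id (1 : ℝ)).inv one_ne_zero)).sub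
          ((Real.hasDerivAt_log one_ne_zero).const_mul 2)
        replace h1 : HasDerivAt (fun t : ℝ => t - t⁻¹ - 2 * Real.log t) (1 - -1 / 1 ^ 2 - 2 * 1⁻¹) 1 := h1
        convert h1 using 1
        norm_num
      have hfd : HasFDerivAt (fun ζ : ℂ => Complex.normSq ζ - (Complex.normSq ζ)⁻¹
          - 2 * Real.log (Complex.normSq ζ))
          ((0 : ℝ) • (fderiv ℝ Complex.normSq z)) z := by
        exact hφ.comp_hasFDerivAt z (hNdiff z).hasFDerivAt
      have hfd0 : fderiv ℝ (fun ζ : ℂ => Complex.normSq ζ - (Complex.normSq ζ)⁻¹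
          - 2 * Real.log (Complex.normSq ζ)) z = 0 := by
        rw [hfd.fderiv, zero_smul]
      have hsplit : g₁ = fun ζ => g₂ ζ + (Complex.normSq ζ - (Complex.normSq ζ)⁻¹
          - 2 * Real.log (Complex.normSq ζ)) := by
        funext ζ
        rw [congrFun g1eq ζ, congrFun g2eq ζ]
        ring
      rw [hsplit, fderiv_fun_add hdg2 hfd.differentiableAt, hfd0, add_zero]
end
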